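/- Let N_r ≥ 2 be an integer. Among all (2N_r)! bijections R from {1,2}×{1,…,N_r} to {1,…,2N_r}, the fraction of bijections for which either (a) the two largest ranks lie in the same column and the third largest rank lies in the same row as the largest rank, or (b) the two largest ranks lie in the same row and the third largest rank lies in the other row, equals (N_r + 1)/(2(2N_r − 1)). This is the probability that the suboptimal relay selection (SRS) scheme's minimum SNR equals the third largest entry γ₃. -/

import Mathlib

/-!
The event only involves the cells holding the three largest ranks. Each injective placement of
these three ranks extends to exactly `(2 N_r - 3)!` bijections (the remaining cells are matched
freely with the remaining ranks), so the fraction equals the number of admissible placements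
divided by the number `2 N_r (2 N_r - 1) (2 N_r - 2)` of all injective placements. On a grid
`ρ × κ`, once the largest cell `a` is fixed, case (a) leaves `(|ρ| - 1)(|κ| - 1)` choices and
case (b) leaves `(|κ| - 1)(|ρ| - 1)|κ|`; for two rows this gives `2 N_r (N_r - 1)(N_r + 1)`.
-/

open Function Nat

section EquivExtension

variable {α β ι : Type*} [Fintype α] [Fintype β] [Fintype ι]

theorem Equiv.card_subtype_forall_apply_eq {f : ι → α} {g : ι → β} (hf : Injective f)
    (hg : Injective g) (hcard : Fintype.card α = Fintype.card β) :
    Nat.card {R : α ≃ β // ∀ i, R (f i) = g i} = (Fintype.card α - Fintype.card ι)! := by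
  classical
  let e₀ : Set.range f ≃ Set.range g := (Equiv.ofInjective f hf).symm.trans (.ofInjective g hg)
  have he₀ : ∀ i, (e₀ ⟨f i, i, rfl⟩ : β) = g i := fun i => by simp [e₀]
  have hf_compl : Fintype.card ((Set.range f)ᶜ : Set α) = Fintype.card α - Fintype.card ι := by
    rw [Fintype.card_compl_set, Set.card_range_of_injective hf]
  have hg_compl : Fintype.card ((Set.range g)ᶜ : Set β) = Fintype.card β - Fintype.card ι := by
    rw [Fintype.card_compl_set, Set.card_range_of_injective hg]
  calc Nat.card {R : α ≃ β // ∀ i, R (f i) = g i}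
      = Nat.card {R : α ≃ β // ∀ p : Set.range f, R p = e₀ p} :=
        Nat.card_congr <| Equiv.subtypeEquivRight fun R => by
          rw [Set.forall_subtype_range_iff]; simp only [he₀]
    _ = Nat.card (((Set.range f)ᶜ : Set α) ≃ ((Set.range g)ᶜ : Set β)) :=
        Nat.card_congr (Equiv.Set.compl e₀)
    _ = (Fintype.card α - Fintype.card ι)! := by
      rw [Nat.card_eq_fintype_card,
        Fintype.card_equiv (Fintype.equivOfCardEq (by rw [hf_compl, hg_compl, hcard])), hf_compl]

theorem Equiv.card_subtype_symm_comp (P : (ι → α) → Prop) {x : ι → β} (hx : Injective x)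
    (hcard : Fintype.card α = Fintype.card β) :
    Nat.card {R : α ≃ β // P (R.symm ∘ x)} =
      Nat.card {f : ι → α // Injective f ∧ P f} * (Fintype.card α - Fintype.card ι)! := by
  classical
  have hP : ∀ R : α ≃ β, P (R.symm ∘ x) ↔ (Injective (R.symm ∘ x) ∧ P (R.symm ∘ x)) :=
    fun R => ⟨fun h => ⟨R.symm.injective.comp hx, h⟩, And.right⟩
  have hfiber : ∀ f : {f : ι → α // Injective f ∧ P f},
      Nat.card {R : α ≃ β // R.symm ∘ x = f} = (Fintype.card α - Fintype.card ι)! := by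
    rintro ⟨f, hf, -⟩
    rw [hcard, ← Equiv.card_subtype_forall_apply_eq hx hf hcard.symm]
    exact Nat.card_congr <| Equiv.subtypeEquiv (Equiv.symmEquiv ..) fun R => funext_iff
  rw [← Nat.card_congr (Equiv.sigmaSubtypeFiberEquivSubtype (q := fun f => Injective f ∧ P f) _ hP),
    Nat.card_sigma]
  simp only [hfiber, Finset.sum_const, Finset.card_univ, smul_eq_mul, ← Nat.card_eq_fintype_card]

end EquivExtension

theorem Fin.injective_three_iff {X : Type*} {f : Fin 3 → X} :
    Injective f ↔ f 0 ≠ f 1 ∧ f 0 ≠ f 2 ∧ f 1 ≠ f 2 := by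
  refine ⟨fun hf => ⟨hf.ne (by decide), hf.ne (by decide), hf.ne (by decide)⟩, ?_⟩
  rintro ⟨h01, h02, h12⟩ i j hij
  fin_cases i <;> fin_cases j <;> simp_all [eq_comm]

theorem card_injective_fin_three {X : Type*} [Fintype X] (Q : X → X → X → Prop) :
    Nat.card {f : Fin 3 → X // Injective f ∧ Q (f 0) (f 1) (f 2)} =
      ∑ a, Nat.card {p : X × X // (a ≠ p.1 ∧ a ≠ p.2 ∧ p.1 ≠ p.2) ∧ Q a p.1 p.2} := by
  rw [← Nat.card_sigma]
  exact Nat.card_congr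
    { toFun f := ⟨f.1 0, (f.1 1, f.1 2), Fin.injective_three_iff.1 f.2.1, f.2.2⟩
      invFun t := ⟨![t.1, t.2.1.1, t.2.1.2], Fin.injective_three_iff.2 t.2.2.1, t.2.2.2⟩
      left_inv f := Subtype.ext (funext fun i => by fin_cases i <;> rfl)
      right_inv t := rfl }

/-- `a`, `b`, `c` are the cells of the largest, second and third largest entries. -/
def SRSMinIsThirdLargest {ρ κ : Type*} (a b c : ρ × κ) : Prop :=
  (a.2 = b.2 ∧ c.1 = a.1) ∨ (a.1 = b.1 ∧ c.1 ≠ a.1)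

section Count

variable {ρ κ : Type*} [Fintype ρ] [Fintype κ]

theorem card_srsMinIsThirdLargest_pairs (a : ρ × κ) :
    Nat.card {p : (ρ × κ) × (ρ × κ) //
        (a ≠ p.1 ∧ a ≠ p.2 ∧ p.1 ≠ p.2) ∧ SRSMinIsThirdLargest a p.1 p.2} =
      (Fintype.card ρ - 1) * (Fintype.card κ - 1) * (Fintype.card κ + 1) := by
  classical
  let otherRow : Finset ρ := {a.1}ᶜ
  let otherCol : Finset κ := {a.2}ᶜ
  let sameColumn := (otherRow ×ˢ {a.2}) ×ˢ ({a.1} ×ˢ otherCol)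
  let sameRow := ({a.1} ×ˢ otherCol) ×ˢ (otherRow ×ˢ (Finset.univ : Finset κ))
  have hsplit : Finset.univ.filter (fun p : (ρ × κ) × (ρ × κ) =>
        (a ≠ p.1 ∧ a ≠ p.2 ∧ p.1 ≠ p.2) ∧ SRSMinIsThirdLargest a p.1 p.2) =
      sameColumn ∪ sameRow := by
    ext ⟨⟨b₁, b₂⟩, ⟨c₁, c₂⟩⟩
    obtain ⟨a₁, a₂⟩ := a
    simp only [SRSMinIsThirdLargest, sameColumn, sameRow, otherRow, otherCol,
      Finset.mem_univ, Finset.mem_union, Finset.mem_product, Finset.mem_compl, Finset.mem_singleton]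
    grind
  have hdisj : Disjoint sameColumn sameRow :=
    Finset.disjoint_product.2 (.inl (Finset.disjoint_product.2 (.inl disjoint_compl_left)))
  rw [Nat.card_eq_fintype_card, Fintype.card_subtype, hsplit, Finset.card_union_of_disjoint hdisj]
  simp only [sameColumn, sameRow, otherRow, otherCol, Finset.card_product, Finset.card_compl,
    Finset.card_singleton, Finset.card_univ]
  ring

theorem card_injective_srsMinIsThirdLargest :
    Nat.card {f : Fin 3 → ρ × κ // Injective f ∧ SRSMinIsThirdLargest (f 0) (f 1) (f 2)} =
      Fintype.card ρ * Fintype.card κ *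
        ((Fintype.card ρ - 1) * (Fintype.card κ - 1) * (Fintype.card κ + 1)) := by
  simp only [card_injective_fin_three, card_srsMinIsThirdLargest_pairs, Finset.sum_const,
    Finset.card_univ, Fintype.card_prod, smul_eq_mul]

end Count

/-- For `Nr ≥ 2`, among all `(2·Nr)!` bijections `R` from `{1,2} × {1,…,Nr}` to
`{1,…,2·Nr}` (the rank of cell `c` is `(R c).val + 1`), the fraction of
bijections for which either (a) the two largest ranks lie in the same column and
the third largest rank lies in the same row as the largest rank, or (b) the two
largest ranks lie in the same row and the third largest rank lies in the other
row, equals `(Nr + 1)/(2(2·Nr − 1))`.  This is the probability that the SRS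
scheme's minimum SNR equals the third largest entry `γ₃`. -/
theorem SRS_min_eq_third_largest_fraction (Nr : ℕ) (hNr : 2 ≤ Nr) :
    (Nat.card {R : (Fin 2 × Fin Nr) ≃ Fin (2 * Nr) //
        ((R.symm ⟨2 * Nr - 1, by omega⟩).2 = (R.symm ⟨2 * Nr - 2, by omega⟩).2 ∧
          (R.symm ⟨2 * Nr - 3, by omega⟩).1 = (R.symm ⟨2 * Nr - 1, by omega⟩).1) ∨
        ((R.symm ⟨2 * Nr - 1, by omega⟩).1 = (R.symm ⟨2 * Nr - 2, by omega⟩).1 ∧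
          (R.symm ⟨2 * Nr - 3, by omega⟩).1 ≠ (R.symm ⟨2 * Nr - 1, by omega⟩).1)} : ℝ)
      / (Nat.factorial (2 * Nr) : ℝ)
      = ((Nr : ℝ) + 1) / (2 * (2 * (Nr : ℝ) - 1)) := by
  let topThree : Fin 3 → Fin (2 * Nr) :=
    ![⟨2 * Nr - 1, by omega⟩, ⟨2 * Nr - 2, by omega⟩, ⟨2 * Nr - 3, by omega⟩]
  have htopThree : Injective topThree :=
    Fin.injective_three_iff.2 (by simp [topThree, Fin.ext_iff]; omega)
  have hcount := Equiv.card_subtype_symm_comp (α := Fin 2 × Fin Nr)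
    (fun f => SRSMinIsThirdLargest (f 0) (f 1) (f 2)) htopThree (by simp [mul_comm])
  rw [card_injective_srsMinIsThirdLargest] at hcount
  simp only [Fintype.card_prod, Fintype.card_fin] at hcount
  erw [hcount]
  obtain ⟨m, rfl⟩ : ∃ m, Nr = m + 2 := ⟨Nr - 2, by omega⟩
  rw [show 2 * (m + 2) = 2 * m + 1 + 3 by ring, Nat.add_sub_cancel]
  simp only [Nat.factorial_succ]
  push_cast
  have hm : (0 : ℝ) ≤ m := m.cast_nonneg
  rw [div_eq_div_iff (by positivity) (ne_of_gt (by linarith))]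
  ring
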